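/- Let H_1, …, H_L be self-adjoint bounded operators on a finite-dimensional complex Hilbert space, let H = Σ_{ℓ=1}^{L} H_ℓ, let t be a real number, and let n ≥ 1. Then each operator exp(2πi (t/n) H_ℓ) is unitary, exp(2πi t H) is unitary, and ‖exp(2πi t H) − (exp(2πi (t/n) H_1) ⋯ exp(2πi (t/n) H_L))^n‖ ≤ (2π|t| Σ_ℓ ‖H_ℓ‖)² · exp(4π|t| Σ_ℓ ‖H_ℓ‖) / n, where ‖·‖ is the operator norm. Thus the Schrödinger evolution U_t = exp(2πi t H) of a poly-local Hamiltonian is approximated in operator norm, with error L²·O(1/n), by an n-fold repetition of the product of the individual local evolutions. -/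

import Mathlib

open NormedSpace Complex
open scoped Nat

/-!
Put `g r = exp r - 1 - r`. If `‖B‖ ≤ b` then `‖exp B - 1 - B‖ ≤ g b`, and estimates of this shape
survive products because `g (b + c) = exp b * g c + g b * (1 + c) + b * c`. Hence `exp (∑ B i)` and
`∏ exp (B i)` both lie within `g σ` of `1 + ∑ B i`, where `σ = ∑ ‖B i‖`, and `2 g σ ≤ σ² exp σ`.
For `B ℓ = 2πi (t/n) H ℓ` both operators are unitary, so the error of their `n`-th powers is at most
`n` times the one-step error, with `σ = 2π|t| ∑ ‖H ℓ‖ / n`.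
-/

section NormedRing

variable {A : Type*} [NormedRing A]

theorem norm_mul_sub_one_sub_add_le {X Y B C : A} {b c : ℝ} (hB : ‖B‖ ≤ b) (hC : ‖C‖ ≤ c)
    (hX : ‖X - 1 - B‖ ≤ Real.exp b - 1 - b) (hY : ‖Y - 1 - C‖ ≤ Real.exp c - 1 - c) :
    ‖X * Y - 1 - (B + C)‖ ≤ Real.exp (b + c) - 1 - (b + c) := by
  have hX1 : ‖X - 1‖ ≤ Real.exp b - 1 := by
    calc ‖X - 1‖ = ‖(X - 1 - B) + B‖ := by rw [sub_add_cancel]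
      _ ≤ Real.exp b - 1 := (norm_add_le _ _).trans (by linarith)
  have h1 : ‖(X - 1) * (Y - 1 - C)‖ ≤ (Real.exp b - 1) * (Real.exp c - 1 - c) :=
    (norm_mul_le _ _).trans (mul_le_mul hX1 hY (norm_nonneg _) ((norm_nonneg _).trans hX1))
  have h2 : ‖(X - 1 - B) * C‖ ≤ (Real.exp b - 1 - b) * c :=
    (norm_mul_le _ _).trans (mul_le_mul hX hC (norm_nonneg _) ((norm_nonneg _).trans hX))
  have h3 : ‖B * C‖ ≤ b * c :=
    (norm_mul_le _ _).trans (mul_le_mul hB hC (norm_nonneg _) ((norm_nonneg _).trans hB))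
  calc ‖X * Y - 1 - (B + C)‖
      = ‖(X - 1) * (Y - 1 - C) + (Y - 1 - C) + (X - 1 - B) + (X - 1 - B) * C + B * C‖ := by
        congr 1; noncomm_ring
    _ ≤ ‖(X - 1) * (Y - 1 - C)‖ + ‖Y - 1 - C‖ + ‖X - 1 - B‖ + ‖(X - 1 - B) * C‖ + ‖B * C‖ :=
        (norm_add_le _ _).trans (add_le_add_left norm_add₄_le _)
    _ ≤ (Real.exp b - 1) * (Real.exp c - 1 - c) + (Real.exp c - 1 - c) + (Real.exp b - 1 - b)
          + (Real.exp b - 1 - b) * c + b * c := by linarith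
    _ = Real.exp (b + c) - 1 - (b + c) := by rw [Real.exp_add]; ring

end NormedRing

section RatAlgebra

variable {A : Type*} [NormedRing A] [NormedAlgebra ℚ A] [CompleteSpace A]

theorem exp_sub_one_sub_eq_tsum (x : A) :
    exp x - 1 - x = ∑' n : ℕ, ((n + 2)!⁻¹ : ℚ) • x ^ (n + 2) := by
  rw [congrFun (exp_eq_tsum ℚ) x, ← (expSeries_summable' (𝕂 := ℚ) x).sum_add_tsum_nat_add 2]
  simp only [Finset.sum_range_succ, Finset.range_one, Finset.sum_singleton, Nat.factorial_zero,
    Nat.factorial_one, Nat.cast_one, inv_one, pow_zero, pow_one, one_smul]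
  abel

theorem norm_exp_sub_one_sub_le {x : A} {r : ℝ} (hx : ‖x‖ ≤ r) :
    ‖exp x - 1 - x‖ ≤ Real.exp r - 1 - r := by
  have hnorm := (norm_expSeries_summable' (𝕂 := ℚ) x).comp_injective (add_left_injective 2)
  rw [exp_sub_one_sub_eq_tsum, Real.exp_eq_exp_ℝ, exp_sub_one_sub_eq_tsum r]
  refine (norm_tsum_le_tsum_norm hnorm).trans (Summable.tsum_le_tsum (fun n => ?_) hnorm
    ((expSeries_summable' (𝕂 := ℚ) r).comp_injective (add_left_injective 2)))
  dsimp only [Function.comp_apply]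
  rw [norm_smul, Rat.smul_def, ← Rat.norm_cast_real, Real.norm_of_nonneg (by positivity)]
  gcongr
  exact (norm_pow_le' x (by omega)).trans (by gcongr)

theorem norm_prod_ofFn_exp_sub_one_sub_sum_le {L : ℕ} (B : Fin L → A) :
    ‖(List.ofFn fun i => exp (B i)).prod - 1 - ∑ i, B i‖ ≤
      Real.exp (∑ i, ‖B i‖) - 1 - ∑ i, ‖B i‖ := by
  induction L with
  | zero => simp
  | succ L ih =>
    rw [List.ofFn_succ, List.prod_cons, Fin.sum_univ_succ, Fin.sum_univ_succ]
    exact norm_mul_sub_one_sub_add_le le_rfl (norm_sum_le _ _) (norm_exp_sub_one_sub_le le_rfl)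
      (ih _)

theorem norm_exp_sum_sub_prod_ofFn_exp_le {L : ℕ} (B : Fin L → A) :
    ‖exp (∑ i, B i) - (List.ofFn fun i => exp (B i)).prod‖ ≤
      2 * (Real.exp (∑ i, ‖B i‖) - 1 - ∑ i, ‖B i‖) := by
  have hexp := norm_exp_sub_one_sub_le (norm_sum_le Finset.univ B)
  have hprod := norm_prod_ofFn_exp_sub_one_sub_sum_le B
  calc _ = ‖(exp (∑ i, B i) - 1 - ∑ i, B i)
            - ((List.ofFn fun i => exp (B i)).prod - 1 - ∑ i, B i)‖ := by congr 1; abel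
    _ ≤ _ := (norm_sub_le _ _).trans (by linarith)

end RatAlgebra

theorem Real.exp_sub_one_sub_le_sq_div_two_mul_exp {s : ℝ} (hs : 0 ≤ s) :
    Real.exp s - 1 - s ≤ s ^ 2 / 2 * Real.exp s := by
  have hexp := expSeries_summable' (𝕂 := ℚ) s
  rw [Real.exp_eq_exp_ℝ, exp_sub_one_sub_eq_tsum, congrFun (exp_eq_tsum ℚ) s, ← tsum_mul_left]
  refine Summable.tsum_le_tsum (fun n => ?_) (hexp.comp_injective (add_left_injective 2))
    (hexp.mul_left _)
  have hfac : (2 * n ! : ℝ) ≤ (n + 2)! := by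
    exact_mod_cast Nat.le_of_dvd (Nat.factorial_pos _)
      (by simpa [mul_comm] using Nat.factorial_mul_factorial_dvd_factorial_add n 2)
  simp only [Rat.smul_def, Rat.cast_inv, Rat.cast_natCast]
  calc ((n + 2)! : ℝ)⁻¹ * s ^ (n + 2) = s ^ 2 * s ^ n / (n + 2)! := by ring
    _ ≤ s ^ 2 * s ^ n / (2 * n !) := by gcongr
    _ = s ^ 2 / 2 * ((n ! : ℝ)⁻¹ * s ^ n) := by ring

section CStarRing

variable {A : Type*} [NormedRing A] [StarRing A] [CStarRing A]

theorem norm_pow_sub_pow_le_of_mem_unitary {U V : A} (hU : U ∈ unitary A) (hV : V ∈ unitary A)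
    (n : ℕ) : ‖U ^ n - V ^ n‖ ≤ n * ‖U - V‖ := by
  induction n with
  | zero => simp
  | succ n ih =>
    calc ‖U ^ (n + 1) - V ^ (n + 1)‖ = ‖U * (U ^ n - V ^ n) + (U - V) * V ^ n‖ := by
          rw [pow_succ', pow_succ']; noncomm_ring
      _ ≤ ‖U ^ n - V ^ n‖ + ‖U - V‖ := (norm_add_le _ _).trans_eq (by
          rw [CStarRing.norm_mem_unitary_mul _ hU, CStarRing.norm_mul_mem_unitary _ (pow_mem hV n)])
      _ ≤ (n + 1 : ℕ) * ‖U - V‖ := by push_cast; linarith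

variable [NormedAlgebra ℚ A] [CompleteSpace A]

theorem norm_exp_sum_pow_sub_prod_ofFn_exp_pow_le {L : ℕ} (B : Fin L → A)
    (hB : ∀ i, B i ∈ skewAdjoint A) (n : ℕ) :
    ‖exp (∑ i, B i) ^ n - (List.ofFn fun i => exp (B i)).prod ^ n‖ ≤
      n * ((∑ i, ‖B i‖) ^ 2 * Real.exp (∑ i, ‖B i‖)) := by
  have hU : exp (∑ i, B i) ∈ unitary A :=
    exp_mem_unitary_of_mem_skewAdjoint (sum_mem fun i _ => hB i)
  have hV : (List.ofFn fun i => exp (B i)).prod ∈ unitary A := by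
    refine Submonoid.list_prod_mem _ fun u hu => ?_
    obtain ⟨i, rfl⟩ := List.mem_ofFn.mp hu
    exact exp_mem_unitary_of_mem_skewAdjoint (hB i)
  have hσ : 0 ≤ ∑ i, ‖B i‖ := by positivity
  calc _ ≤ n * ‖exp (∑ i, B i) - (List.ofFn fun i => exp (B i)).prod‖ :=
        norm_pow_sub_pow_le_of_mem_unitary hU hV n
    _ ≤ n * (2 * (Real.exp (∑ i, ‖B i‖) - 1 - ∑ i, ‖B i‖)) := by
        gcongr n * ?_; exact norm_exp_sum_sub_prod_ofFn_exp_le B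
    _ ≤ n * ((∑ i, ‖B i‖) ^ 2 * Real.exp (∑ i, ‖B i‖)) := by
        gcongr n * ?_; linarith [Real.exp_sub_one_sub_le_sq_div_two_mul_exp hσ]

end CStarRing

/-- **Trotter simulation of a poly-local Hamiltonian.** Let `H 1, …, H L` be
self-adjoint bounded operators on a finite-dimensional complex Hilbert space,
`Htot = ∑ ℓ, H ℓ`, `t : ℝ`, `n ≥ 1`.  Each `exp(2πi(t/n) H ℓ)` is unitary,
`exp(2πi t Htot)` is unitary, and
`‖exp(2πi t Htot) − (exp(2πi(t/n) H 1) ⋯ exp(2πi(t/n) H L))^n‖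
  ≤ (2π|t| ∑ ℓ ‖H ℓ‖)² · exp(4π|t| ∑ ℓ ‖H ℓ‖) / n`. -/
theorem trotter_unitary_evolution {E : Type*} [NormedAddCommGroup E]
    [InnerProductSpace ℂ E] [FiniteDimensional ℂ E]
    (L : ℕ) (H : Fin L → E →L[ℂ] E) (hH : ∀ ℓ, IsSelfAdjoint (H ℓ))
    (Htot : E →L[ℂ] E) (hHtot : Htot = ∑ ℓ, H ℓ) (t : ℝ) (n : ℕ) (hn : 1 ≤ n) :
    (∀ ℓ, NormedSpace.exp ((2 * Real.pi * I * (t / n)) • H ℓ) ∈ unitary (E →L[ℂ] E)) ∧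
    NormedSpace.exp ((2 * Real.pi * I * t) • Htot) ∈ unitary (E →L[ℂ] E) ∧
    ‖NormedSpace.exp ((2 * Real.pi * I * t) • Htot) -
        (List.ofFn fun ℓ => NormedSpace.exp ((2 * Real.pi * I * (t / n)) • H ℓ)).prod ^ n‖ ≤
      (2 * Real.pi * |t| * ∑ ℓ, ‖H ℓ‖) ^ 2 *
        Real.exp (4 * Real.pi * |t| * ∑ ℓ, ‖H ℓ‖) / n := by
  -- `exp` is developed over `ℚ`, and `E →L[ℂ] E` has no global `ℚ`-algebra instance.
  let +nondep : NormedAlgebra ℚ (E →L[ℂ] E) := .restrictScalars ℚ ℂ _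
  have hskew (r : ℝ) : (2 * Real.pi * I * r : ℂ) ∈ skewAdjoint ℂ := by
    simp [skewAdjoint.mem_iff]
  have hc : (2 * Real.pi * I * (t / n) : ℂ) ∈ skewAdjoint ℂ := by exact_mod_cast hskew (t / n)
  have hHtot_sa : IsSelfAdjoint Htot := hHtot ▸ isSelfAdjoint_sum _ fun ℓ _ => hH ℓ
  refine ⟨fun ℓ => exp_mem_unitary_of_mem_skewAdjoint ((hH ℓ).smul_mem_skewAdjoint hc),
    exp_mem_unitary_of_mem_skewAdjoint (hHtot_sa.smul_mem_skewAdjoint (hskew t)), ?_⟩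
  have hn0 : (n : ℂ) ≠ 0 := Nat.cast_ne_zero.2 (by omega)
  have hsmul : (2 * Real.pi * I * t) • Htot = n • ∑ ℓ, (2 * Real.pi * I * (t / n)) • H ℓ := by
    rw [hHtot, ← Finset.smul_sum, ← Nat.cast_smul_eq_nsmul ℂ, smul_smul]
    congr 1; field_simp
  have hnorm :
      ∑ ℓ, ‖(2 * Real.pi * I * (t / n)) • H ℓ‖ = 2 * Real.pi * |t| * (∑ ℓ, ‖H ℓ‖) / n := by
    simp only [norm_smul, Complex.norm_mul, norm_ofNat, norm_real, Real.norm_eq_abs,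
      abs_of_pos Real.pi_pos, norm_I, mul_one, Complex.norm_div, RCLike.norm_natCast,
      ← Finset.mul_sum]
    ring
  rw [hsmul, NormedSpace.exp_nsmul]
  refine (norm_exp_sum_pow_sub_prod_ofFn_exp_pow_le _
    (fun ℓ => (hH ℓ).smul_mem_skewAdjoint hc) n).trans ?_
  rw [hnorm]
  set s := 2 * Real.pi * |t| * ∑ ℓ, ‖H ℓ‖
  have hs : 0 ≤ s := by positivity
  have hsn : s / n ≤ 4 * Real.pi * |t| * ∑ ℓ, ‖H ℓ‖ := by
    have : s / n ≤ s := div_le_self hs (by exact_mod_cast hn)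
    linarith
  calc n * ((s / n) ^ 2 * Real.exp (s / n)) = s ^ 2 * Real.exp (s / n) / n := by
        field_simp
    _ ≤ _ := by gcongr
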